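/- Let Λ be a hereditary artin algebra and T a module with Ext¹(T,T) = 0. Then 𝒢(T), the class of modules generated by T, is a torsion class (closed under quotient modules and extensions) and T is a cover of 𝒢(T). -/

import Mathlib

open CategoryTheory

section Defs

variable (Λ : Type) [Ring Λ]

/-- `Ext¹(M, N) = 0`: every short exact sequence `0 → N → E → M → 0` splits. -/
def ExtVanish (M N : Type) [AddCommGroup M] [Module Λ M] [AddCommGroup N] [Module Λ N] : Prop :=
  ∀ (E : Type) [AddCommGroup E] [Module Λ E] (f : N →ₗ[Λ] E) (g : E →ₗ[Λ] M),
    Function.Injective f → Function.Surjective g → LinearMap.range f = LinearMap.ker g →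
    ∃ s : M →ₗ[Λ] E, g.comp s = LinearMap.id

/-- `X` generates `Y`: `Y` is a quotient of a finite direct sum of copies of `X`. -/
def Generates (X Y : Type) [AddCommGroup X] [Module Λ X] [AddCommGroup Y] [Module Λ Y] : Prop :=
  ∃ (n : ℕ) (g : (Fin n → X) →ₗ[Λ] Y), Function.Surjective g

/-- `X` cogenerates `Y`: `Y` embeds into a finite direct sum of copies of `X`. -/
def Cogenerates (X Y : Type) [AddCommGroup X] [Module Λ X] [AddCommGroup Y] [Module Λ Y] : Prop :=
  ∃ (n : ℕ) (f : Y →ₗ[Λ] (Fin n → X)), Function.Injective f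

/-- The endomorphism ring of `M` is a division ring. -/
def IsBrick (M : Type) [AddCommGroup M] [Module Λ M] : Prop :=
  (0 : Module.End Λ M) ≠ 1 ∧ ∀ f : Module.End Λ M, f ≠ 0 → IsUnit f

/-- `X ∈ add T`. -/
def InAdd (T X : Type) [AddCommGroup T] [Module Λ T] [AddCommGroup X] [Module Λ X] : Prop :=
  ∃ (m : ℕ) (ι : X →ₗ[Λ] (Fin m → T)) (p : (Fin m → T) →ₗ[Λ] X), p.comp ι = LinearMap.id

/-- A module is normal if in any decomposition `M ≅ M' ⊕ M''` with `M'` generating `M''`,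
the summand `M''` vanishes. -/
def IsNormal (M : Type) [AddCommGroup M] [Module Λ M] : Prop :=
  ∀ (M' M'' : Type) [AddCommGroup M'] [Module Λ M'] [AddCommGroup M''] [Module Λ M''],
    Nonempty (M ≃ₗ[Λ] M' × M'') → Generates Λ M' M'' → Subsingleton M''

/-- `N` is a normalization of `M`. -/
def IsNormalization (M N : Type) [AddCommGroup M] [Module Λ M] [AddCommGroup N] [Module Λ N] :
    Prop :=
  IsNormal Λ N ∧ ∃ Y : ModuleCat.{0} Λ, Nonempty (M ≃ₗ[Λ] N × Y) ∧ Generates Λ N Y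

/-- An indecomposable (nonzero) module. -/
def Indec (M : Type) [AddCommGroup M] [Module Λ M] : Prop :=
  ¬ Subsingleton M ∧ ∀ (P Q : Type) [AddCommGroup P] [Module Λ P] [AddCommGroup Q] [Module Λ Q],
    Nonempty (M ≃ₗ[Λ] P × Q) → Subsingleton P ∨ Subsingleton Q

/-- `S` is a composition factor of `M` (a subquotient, which for simple `S` is the same). -/
def IsCompositionFactor (M S : Type) [AddCommGroup M] [Module Λ M] [AddCommGroup S]
    [Module Λ S] : Prop :=
  ∃ (B A : Submodule Λ M), A ≤ B ∧
    Nonempty ((B ⧸ Submodule.comap B.subtype A) ≃ₗ[Λ] S)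

/-- Every simple module occurs as a composition factor of `M`. -/
def IsSincere (M : Type) [AddCommGroup M] [Module Λ M] : Prop :=
  ∀ (S : Type) [AddCommGroup S] [Module Λ S], IsSimpleModule Λ S → IsCompositionFactor Λ M S

/-- Submodules of projective modules are projective. -/
def IsHereditaryRing : Prop :=
  ∀ (P : Type) [AddCommGroup P] [Module Λ P], Module.Projective Λ P →
    ∀ N : Submodule Λ P, Module.Projective Λ N

/-- A finite family of pairwise orthogonal bricks. -/
def IsAntichainFam (t : ℕ) (A : Fin t → Type) [∀ i, AddCommGroup (A i)]
    [∀ i, Module Λ (A i)] : Prop :=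
  (∀ i, IsBrick Λ (A i)) ∧ ∀ i j, i ≠ j → ∀ f : A i →ₗ[Λ] A j, f = 0

/-- The antichain is exceptional: it can be reindexed so that `Ext¹(A i, A j) = 0` for `i ≥ j`,
i.e. its Ext-quiver is acyclic. -/
def IsExceptionalFam (t : ℕ) (A : Fin t → Type) [∀ i, AddCommGroup (A i)]
    [∀ i, Module Λ (A i)] : Prop :=
  ∃ σ : Equiv.Perm (Fin t), ∀ i j : Fin t, j ≤ i → ExtVanish Λ (A (σ i)) (A (σ j))

/-- `M` has a finite filtration with successive quotients among the `A j`. -/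
def HasFiltration (t : ℕ) (A : Fin t → Type) [∀ i, AddCommGroup (A i)] [∀ i, Module Λ (A i)]
    (M : Type) [AddCommGroup M] [Module Λ M] : Prop :=
  ∃ (s : ℕ) (F : Fin (s + 1) → Submodule Λ M), Monotone F ∧ F 0 = ⊥ ∧ F (Fin.last s) = ⊤ ∧
    ∀ i : Fin s, ∃ j : Fin t,
      Nonempty ((F i.succ ⧸ Submodule.comap (F i.succ).subtype (F i.castSucc)) ≃ₗ[Λ] A j)

/-- The subcategory `F(A)` of modules filtered by the antichain `A`. -/
def FiltClass (t : ℕ) (A : Fin t → Type) [∀ i, AddCommGroup (A i)] [∀ i, Module Λ (A i)] :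
    Set (ModuleCat.{0} Λ) :=
  {M | HasFiltration Λ t A M}

/-- A thick subcategory of `mod Λ`: closed under isomorphisms, finite direct sums, direct
summands, kernels, cokernels and extensions. -/
structure IsThick (𝒜 : Set (ModuleCat.{0} Λ)) : Prop where
  respIso : ∀ M N : ModuleCat.{0} Λ, (M ≃ₗ[Λ] N) → M ∈ 𝒜 → N ∈ 𝒜
  zero : ModuleCat.of Λ PUnit ∈ 𝒜
  prod : ∀ M N : ModuleCat.{0} Λ, M ∈ 𝒜 → N ∈ 𝒜 → ModuleCat.of Λ (M × N) ∈ 𝒜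
  summand : ∀ (M N : ModuleCat.{0} Λ), M ∈ 𝒜 →
    (∃ (ι : N →ₗ[Λ] M) (p : M →ₗ[Λ] N), p.comp ι = LinearMap.id) → N ∈ 𝒜
  ker : ∀ (M N : ModuleCat.{0} Λ) (f : M →ₗ[Λ] N), M ∈ 𝒜 → N ∈ 𝒜 →
    ModuleCat.of Λ (LinearMap.ker f) ∈ 𝒜
  coker : ∀ (M N : ModuleCat.{0} Λ) (f : M →ₗ[Λ] N), M ∈ 𝒜 → N ∈ 𝒜 →
    ModuleCat.of Λ (N ⧸ LinearMap.range f) ∈ 𝒜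
  extClosed : ∀ (M E N : ModuleCat.{0} Λ) (f : M →ₗ[Λ] E) (g : E →ₗ[Λ] N),
    Function.Injective f → Function.Surjective g → LinearMap.range f = LinearMap.ker g →
    M ∈ 𝒜 → N ∈ 𝒜 → E ∈ 𝒜

/-- A simple object of the (abelian) subcategory `𝒜`. -/
def IsSimpleIn (𝒜 : Set (ModuleCat.{0} Λ)) (M : ModuleCat.{0} Λ) : Prop :=
  M ∈ 𝒜 ∧ ¬ Subsingleton M ∧
    ∀ N : Submodule Λ M, ModuleCat.of Λ N ∈ 𝒜 → N = ⊥ ∨ N = ⊤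

/-- `C` is a cover of the subcategory `𝒜`. -/
def IsCoverOf (𝒜 : Set (ModuleCat.{0} Λ)) (C : ModuleCat.{0} Λ) : Prop :=
  C ∈ 𝒜 ∧ ∀ M ∈ 𝒜, Generates Λ C M

/-- `C` is a cocover of the subcategory `𝒜`. -/
def IsCocoverOf (𝒜 : Set (ModuleCat.{0} Λ)) (C : ModuleCat.{0} Λ) : Prop :=
  C ∈ 𝒜 ∧ ∀ M ∈ 𝒜, Cogenerates Λ C M

/-- A torsion class: a class of modules closed under quotients and extensions. -/
def IsTorsionClass (𝒞 : Set (ModuleCat.{0} Λ)) : Prop :=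
  (∀ M ∈ 𝒞, ∀ (N : ModuleCat.{0} Λ) (f : M →ₗ[Λ] N), Function.Surjective f → N ∈ 𝒞) ∧
  (∀ (M E N : ModuleCat.{0} Λ) (f : M →ₗ[Λ] E) (g : E →ₗ[Λ] N),
    Function.Injective f → Function.Surjective g → LinearMap.range f = LinearMap.ker g →
    M ∈ 𝒞 → N ∈ 𝒞 → E ∈ 𝒞)

/-- `𝒢(T)`: the (finite length) modules generated by `T`. -/
def GenClass (T : Type) [AddCommGroup T] [Module Λ T] : Set (ModuleCat.{0} Λ) :=
  {M | IsFiniteLength Λ M ∧ Generates Λ T M}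

/-- Membership in the two-sided ideal of `Λ` generated by the idempotents annihilating `M`. -/
def InSupportIdeal (M : Type) [AddCommGroup M] [Module Λ M] (a : Λ) : Prop :=
  ∃ (n : ℕ) (x y e : Fin n → Λ),
    (∀ i, IsIdempotentElem (e i) ∧ ∀ m : M, e i • m = 0) ∧ a = ∑ i, x i * e i * y i

end Defs

/-- `T` is a tilting `R`-module: no self-extensions, and `R` is the kernel of a surjective
map in `add T`. -/
def IsTiltingMod (R : Type) [Ring R] (T : Type) [AddCommGroup T] [Module R T] : Prop :=
  ExtVanish R T T ∧
    ∃ X Y : ModuleCat.{0} R, InAdd R T X ∧ InAdd R T Y ∧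
      ∃ (f : R →ₗ[R] X) (g : X →ₗ[R] Y),
        Function.Injective f ∧ Function.Surjective g ∧ LinearMap.range f = LinearMap.ker g

/-- `T` is support-tilting: `T` is a tilting module over its support algebra `Λ(T)`
(presented as any quotient of `Λ` by the ideal generated by the idempotents killing `T`). -/
def IsSupportTilting (Λ : Type) [Ring Λ] (T : Type) [AddCommGroup T] [Module Λ T] : Prop :=
  ∀ (R : Type) [Ring R] (π : Λ →+* R), Function.Surjective π →
    (∀ a : Λ, π a = 0 ↔ InSupportIdeal Λ T a) →
    ∀ [Module R T], (∀ (a : Λ) (x : T), a • x = π a • x) → IsTiltingMod R T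

section MoreDefs
variable (Λ : Type) [Ring Λ]

/-- A factor complement `Y` for `N`: `Y` is generated by `N` and `N ⊕ Y` is support-tilting. -/
def IsFactorComplement (N Y : Type) [AddCommGroup N] [Module Λ N] [AddCommGroup Y]
    [Module Λ Y] : Prop :=
  Generates Λ N Y ∧ IsSupportTilting Λ (N × Y)

/-- A minimal factor complement: a factor complement all of whose factor-complement direct
summands are Morita equivalent to it. -/
def IsMinimalFactorComplement (N Y : Type) [AddCommGroup N] [Module Λ N] [AddCommGroup Y]
    [Module Λ Y] : Prop :=
  IsFactorComplement Λ N Y ∧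
    ∀ Y' : ModuleCat.{0} Λ, InAdd Λ Y Y' → IsFactorComplement Λ N Y' → InAdd Λ Y' Y

/-- `Λ` is representation-finite. -/
def IsRepFinite : Prop :=
  ∃ (t : ℕ) (R : Fin t → ModuleCat.{0} Λ),
    ∀ M : ModuleCat.{0} Λ, IsFiniteLength Λ M → Indec Λ M → ∃ i, Nonempty (M ≃ₗ[Λ] R i)

end MoreDefs
section ExtraDefs
variable (Λ : Type) [Ring Λ]

/-- `X ∈ add {Nf j : j ∈ S}`. -/
def InAddFam (t : ℕ) (Nf : Fin t → Type) [∀ i, AddCommGroup (Nf i)] [∀ i, Module Λ (Nf i)]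
    (S : Set (Fin t)) (X : Type) [AddCommGroup X] [Module Λ X] : Prop :=
  ∃ (m : ℕ) (c : Fin m → Fin t), (∀ a, c a ∈ S) ∧
    ∃ (ι : X →ₗ[Λ] ∀ a, Nf (c a)) (p : (∀ a, Nf (c a)) →ₗ[Λ] X), p.comp ι = LinearMap.id

/-- `X` is killed by the support ideal of `N`, i.e. `X` is a module over the
support algebra `Λ(N)`. -/
def KilledBySupportIdeal (N X : Type) [AddCommGroup N] [Module Λ N] [AddCommGroup X]
    [Module Λ X] : Prop :=
  ∀ a : Λ, InSupportIdeal Λ N a → ∀ x : X, a • x = 0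

end ExtraDefs

/-- An equivalence (automatically exact) between the abelian category `𝒜` and the category
of finite length modules over an artin algebra `B`. -/
structure ArtinAlgebraModel (Λ : Type) [Ring Λ] (𝒜 : Set (ModuleCat.{0} Λ)) where
  k' : Type
  [ck' : CommRing k']
  [ak' : IsArtinianRing k']
  B : Type
  [rB : Ring B]
  [algB : Algebra k' B]
  flB : IsFiniteLength k' B
  equiv : CategoryTheory.ObjectProperty.FullSubcategory (fun M : ModuleCat.{0} Λ => M ∈ 𝒜) ≌
    CategoryTheory.ObjectProperty.FullSubcategory (fun M : ModuleCat.{0} B => IsFiniteLength B M)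

/-- The hom-space from `x` to `y` in the linearization `kP` of a poset `P` over a field `k`:
it is `k` if `x ≤ y` and `0` otherwise; composition is multiplication in `k`. -/
def pHom (kk P : Type) [Field kk] [PartialOrder P] (x y : P) : Type :=
  {c : kk // ¬ x ≤ y → c = 0}

/-!
Closure under quotients is immediate. Given an extension `0 → M → E → N → 0` with `M` and `N`
generated by `T`, pick a surjection `Tⁿ → N`; if `Ext¹(Tⁿ, M) = 0` it lifts to `E`, and then `E`
is a quotient of `M ⊕ Tⁿ`. This vanishing follows from `Ext¹(T, T) = 0`, because `Ext¹` commutes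
with finite direct sums and, over a hereditary ring, `Ext¹(X, -)` is right exact, so it passes from
`Tᵐ` to its quotient `M`. Vanishing of `Ext¹(X, A)` is tested on a free presentation
`0 → K → F → X → 0`: it holds iff every map `K → A` extends to `F`.
-/

open Function LinearMap

section Factorization

variable {R : Type*} [Ring R] {K M N P : Type*} [AddCommGroup K] [Module R K] [AddCommGroup M]
  [Module R M] [AddCommGroup N] [Module R N] [AddCommGroup P] [Module R P]

theorem LinearMap.exists_comp_eq_of_range_le {f : M →ₗ[R] N} (hf : Injective f) {φ : K →ₗ[R] N}
    (h : range φ ≤ range f) : ∃ α : K →ₗ[R] M, f ∘ₗ α = φ := by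
  refine ⟨(LinearEquiv.ofInjective f hf).symm.toLinearMap ∘ₗ
    codRestrict (range f) φ fun x => h (mem_range_self φ x), ?_⟩
  ext x
  simp

theorem LinearMap.exists_comp_eq_of_ker_le {π : M →ₗ[R] P} (hπ : Surjective π) {φ : M →ₗ[R] N}
    (h : ker π ≤ ker φ) : ∃ ψ : P →ₗ[R] N, ψ ∘ₗ π = φ := by
  refine ⟨(ker π).liftQ φ h ∘ₗ (π.quotKerEquivOfSurjective hπ).symm.toLinearMap, ?_⟩
  ext x
  simp

end Factorization

namespace ExtVanish

variable {Λ : Type} [Ring Λ] {K F X A E Y : Type} [AddCommGroup K] [Module Λ K]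
  [AddCommGroup F] [Module Λ F] [AddCommGroup X] [Module Λ X] [AddCommGroup A] [Module Λ A]
  [AddCommGroup E] [Module Λ E] [AddCommGroup Y] [Module Λ Y]

/-- Pushing the extension `0 → K → F → X → 0` out along `β` gives an extension of `X` by `A`;
a retraction of the latter restricts to the required extension of `β`. -/
theorem exists_extend (h : ExtVanish Λ X A) {ι : K →ₗ[Λ] F} {π : F →ₗ[Λ] X}
    (hι : Injective ι) (hπ : Surjective π) (hιπ : Exact ι π) (β : K →ₗ[Λ] A) :
    ∃ β' : F →ₗ[Λ] A, β' ∘ₗ ι = β := by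
  set W := range (inl Λ A F ∘ₗ β - inr Λ A F ∘ₗ ι)
  have hW : W ≤ ker (π ∘ₗ snd Λ A F) := by
    rintro _ ⟨k, rfl⟩
    simp [hιπ.apply_apply_eq_zero]
  let j : A →ₗ[Λ] (A × F) ⧸ W := W.mkQ ∘ₗ inl Λ A F
  let π' : ((A × F) ⧸ W) →ₗ[Λ] X := W.liftQ (π ∘ₗ snd Λ A F) hW
  have hj : Injective j := by
    refine (injective_iff_map_eq_zero j).mpr fun a ha => ?_
    obtain ⟨k, hk⟩ := (Submodule.Quotient.mk_eq_zero W).mp ha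
    obtain ⟨rfl, hιk⟩ : β k = a ∧ ι k = 0 := by simpa [Prod.ext_iff] using hk
    rw [hι (hιk.trans (map_zero ι).symm), map_zero]
  have hπ' : Surjective π' := fun x => by
    obtain ⟨u, rfl⟩ := hπ x
    exact ⟨W.mkQ (0, u), rfl⟩
  have hjπ' : Exact j π' := by
    intro z
    obtain ⟨⟨a, u⟩, rfl⟩ := W.mkQ_surjective z
    refine ⟨fun hz => ?_, ?_⟩
    · obtain ⟨k, rfl⟩ := (hιπ u).mp hz
      refine ⟨a + β k, (Submodule.Quotient.eq W).mpr ⟨k, ?_⟩⟩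
      simp
    · rintro ⟨a', ha'⟩
      rw [← ha']
      simp [j, π']
  obtain ⟨s, hs⟩ := h _ j π' hj hπ' hjπ'.linearMap_ker_eq.symm
  have hsplit := (hjπ'.split_tfae hj hπ').out 0 1
  obtain ⟨r, hr⟩ := hsplit.mp ⟨s, hs⟩
  refine ⟨r ∘ₗ W.mkQ ∘ₗ inr Λ A F, ?_⟩
  ext k
  have hk : j (β k) = W.mkQ (0, ι k) := (Submodule.Quotient.eq W).mpr <|
    show (β k, 0) - (0, ι k) ∈ W from ⟨k, by simp⟩
  simpa [hk] using congr($hr (β k))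

/-- Lift `φ ∘ π` to `h : F → E` by projectivity; correcting `h` by an extension of its restriction
to `K` (which lands in `A`) makes it vanish on `K`, so it descends to `X`. -/
theorem exists_comp_eq_of_forall_extend [Module.Projective Λ F] {ι : K →ₗ[Λ] F} {π : F →ₗ[Λ] X}
    (hπ : Surjective π) (hιπ : Exact ι π)
    (hext : ∀ β : K →ₗ[Λ] A, ∃ β' : F →ₗ[Λ] A, β' ∘ₗ ι = β) {f : A →ₗ[Λ] E} {g : E →ₗ[Λ] Y}
    (hf : Injective f) (hg : Surjective g) (hfg : Exact f g) (φ : X →ₗ[Λ] Y) :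
    ∃ ψ : X →ₗ[Λ] E, g ∘ₗ ψ = φ := by
  obtain ⟨h, hh⟩ := Module.projective_lifting_property g (φ ∘ₗ π) hg
  obtain ⟨α, hα⟩ : ∃ α : K →ₗ[Λ] A, f ∘ₗ α = h ∘ₗ ι := by
    refine exists_comp_eq_of_range_le hf ?_
    rintro _ ⟨k, rfl⟩
    refine (hfg _).mp ?_
    simpa using congr($hh (ι k)).trans (congrArg φ (hιπ.apply_apply_eq_zero k))
  obtain ⟨α', hα'⟩ := hext α
  obtain ⟨ψ, hψ⟩ := exists_comp_eq_of_ker_le hπ (φ := h - f ∘ₗ α') <| by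
    intro u hu
    obtain ⟨k, rfl⟩ := (hιπ u).mp hu
    have hαk : f (α k) = h (ι k) := congr($hα k)
    have hα'k : α' (ι k) = α k := congr($hα' k)
    simp [hα'k, hαk]
  refine ⟨ψ, (cancel_right hπ).mp ?_⟩
  rw [LinearMap.comp_assoc, hψ, comp_sub, hh, ← LinearMap.comp_assoc, hfg.linearMap_comp_eq_zero,
    zero_comp, sub_zero]

theorem of_forall_extend [Module.Projective Λ F] {ι : K →ₗ[Λ] F} {π : F →ₗ[Λ] X}
    (hπ : Surjective π) (hιπ : Exact ι π)
    (hext : ∀ β : K →ₗ[Λ] A, ∃ β' : F →ₗ[Λ] A, β' ∘ₗ ι = β) : ExtVanish Λ X A :=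
  fun _ _ _ _ _ hf hg hfg =>
    exists_comp_eq_of_forall_extend hπ hιπ hext hf hg (LinearMap.exact_iff.mpr hfg.symm) id

theorem exists_lift (h : ExtVanish Λ X A) {f : A →ₗ[Λ] E} {g : E →ₗ[Λ] Y} (hf : Injective f)
    (hg : Surjective g) (hfg : Exact f g) (φ : X →ₗ[Λ] Y) : ∃ ψ : X →ₗ[Λ] E, g ∘ₗ ψ = φ := by
  have hπ := Finsupp.linearCombination_id_surjective Λ X
  have hex := exact_subtype_ker_map (Finsupp.linearCombination Λ (id : X → X))
  exact exists_comp_eq_of_forall_extend hπ hex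
    (h.exists_extend (ker _).injective_subtype hπ hex) hf hg hfg φ

theorem pi_right {I : Type} (h : ExtVanish Λ X A) : ExtVanish Λ X (I → A) := by
  have hπ := Finsupp.linearCombination_id_surjective Λ X
  have hex := exact_subtype_ker_map (Finsupp.linearCombination Λ (id : X → X))
  refine of_forall_extend (ι := (ker _).subtype) hπ hex fun β => ?_
  choose β' hβ' using fun i => h.exists_extend (ker _).injective_subtype hπ hex (proj i ∘ₗ β)
  exact ⟨LinearMap.pi β', by ext k i; exact congr($(hβ' i) k)⟩

theorem pi_left {I : Type} [Fintype I] [DecidableEq I] (h : ExtVanish Λ X A) :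
    ExtVanish Λ (I → X) A := by
  intro E _ _ f g hf hg hfg
  choose ψ hψ using fun i =>
    h.exists_lift hf hg (LinearMap.exact_iff.mpr hfg.symm) (LinearMap.single Λ (fun _ => X) i)
  refine ⟨∑ i, ψ i ∘ₗ proj i, ?_⟩
  have hψ' : ∀ i x, g (ψ i x) = Pi.single i x := fun i x => congr($(hψ i) x)
  ext v
  simp [hψ']

/-- The syzygy `K` of `X` is projective, so a map `K → Y` lifts to `A`, where it extends. -/
theorem of_surjective_right (hher : IsHereditaryRing Λ) (h : ExtVanish Λ X A) {q : A →ₗ[Λ] Y}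
    (hq : Surjective q) : ExtVanish Λ X Y := by
  have hπ := Finsupp.linearCombination_id_surjective Λ X
  have hex := exact_subtype_ker_map (Finsupp.linearCombination Λ (id : X → X))
  have : Module.Projective Λ (ker (Finsupp.linearCombination Λ (id : X → X))) :=
    hher _ inferInstance _
  refine of_forall_extend (ι := (ker _).subtype) hπ hex fun α => ?_
  obtain ⟨β, hβ⟩ := Module.projective_lifting_property q α hq
  obtain ⟨β', hβ'⟩ := h.exists_extend (ker _).injective_subtype hπ hex β
  exact ⟨q ∘ₗ β', by rw [LinearMap.comp_assoc, hβ', hβ]⟩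

end ExtVanish

theorem IsFiniteLength.of_range_eq_ker {R M N P : Type*} [Ring R] [AddCommGroup M] [Module R M]
    [AddCommGroup N] [Module R N] [AddCommGroup P] [Module R P] {f : M →ₗ[R] N}
    {g : N →ₗ[R] P} (hM : IsFiniteLength R M) (hP : IsFiniteLength R P)
    (hfg : range f = ker g) : IsFiniteLength R N := by
  rw [isFiniteLength_iff_isNoetherian_isArtinian] at hM hP ⊢
  obtain ⟨_, _⟩ := hM
  obtain ⟨_, _⟩ := hP
  exact ⟨isNoetherian_of_range_eq_ker f g hfg, isArtinian_of_range_eq_ker f g hfg⟩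

section Generation

variable {Λ : Type} [Ring Λ] {T X M N E : Type} [AddCommGroup T] [Module Λ T] [AddCommGroup X]
  [Module Λ X] [AddCommGroup M] [Module Λ M] [AddCommGroup N] [Module Λ N] [AddCommGroup E]
  [Module Λ E]

theorem generates_self : Generates Λ T T :=
  ⟨1, proj 0, fun t => ⟨fun _ => t, rfl⟩⟩

theorem generates_pi (n : ℕ) : Generates Λ T (Fin n → T) :=
  ⟨n, LinearMap.id, surjective_id⟩

theorem Generates.of_surjective (h : Generates Λ T M) {f : M →ₗ[Λ] N} (hf : Surjective f) :
    Generates Λ T N :=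
  let ⟨n, q, hq⟩ := h
  ⟨n, f ∘ₗ q, hf.comp hq⟩

theorem Generates.prod (hM : Generates Λ T M) (hN : Generates Λ T N) :
    Generates Λ T (M × N) := by
  obtain ⟨m, p, hp⟩ := hM
  obtain ⟨n, q, hq⟩ := hN
  let e := (LinearEquiv.funCongrLeft Λ T finSumFinEquiv).trans
    (LinearEquiv.sumArrowLequivProdArrow (Fin m) (Fin n) Λ T)
  exact ⟨m + n, p.prodMap q ∘ₗ e.toLinearMap, (hp.prodMap hq).comp e.surjective⟩

theorem ExtVanish.exists_surjective_prod (h : ExtVanish Λ X M) {f : M →ₗ[Λ] E} {g : E →ₗ[Λ] N}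
    (hf : Injective f) (hg : Surjective g) (hfg : Exact f g) {p : X →ₗ[Λ] N}
    (hp : Surjective p) : ∃ φ : M × X →ₗ[Λ] E, Surjective φ := by
  obtain ⟨ψ, hψ⟩ := h.exists_lift hf hg hfg p
  refine ⟨f.coprod ψ, fun e => ?_⟩
  obtain ⟨x, hx⟩ := hp (g e)
  obtain ⟨m, hm⟩ := (hfg (e - ψ x)).mp <| by
    rw [map_sub, ← comp_apply g ψ, hψ, hx, sub_self]
  exact ⟨(m, x), by simp [hm]⟩

theorem ExtVanish.pi_of_generates (hher : IsHereditaryRing Λ) (hself : ExtVanish Λ T T)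
    (hM : Generates Λ T M) (n : ℕ) : ExtVanish Λ (Fin n → T) M :=
  let ⟨_, _, hq⟩ := hM
  hself.pi_left.pi_right.of_surjective_right hher hq

theorem Generates.of_exact (hher : IsHereditaryRing Λ) (hself : ExtVanish Λ T T)
    (hM : Generates Λ T M) (hN : Generates Λ T N) {f : M →ₗ[Λ] E} {g : E →ₗ[Λ] N}
    (hf : Injective f) (hg : Surjective g) (hfg : Exact f g) : Generates Λ T E := by
  obtain ⟨n, p, hp⟩ := hN
  obtain ⟨φ, hφ⟩ := (ExtVanish.pi_of_generates hher hself hM n).exists_surjective_prod hf hg hfg hp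
  exact (hM.prod (generates_pi n)).of_surjective hφ

theorem isTorsionClass_genClass (hher : IsHereditaryRing Λ) (hself : ExtVanish Λ T T) :
    IsTorsionClass Λ (GenClass Λ T) :=
  ⟨fun _ hM _ _ hf => ⟨hM.1.of_surjective hf, hM.2.of_surjective hf⟩,
    fun _ _ _ _ _ hf hg hfg hM hN =>
      ⟨hM.1.of_range_eq_ker hN.1 hfg,
        hM.2.of_exact hher hself hN.2 hf hg (LinearMap.exact_iff.mpr hfg.symm)⟩⟩

end Generation

theorem stmt11_general
    (Λ : Type) [Ring Λ]
    (hher : IsHereditaryRing Λ)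
    (T : Type) [AddCommGroup T] [Module Λ T] (hTfl : IsFiniteLength Λ T)
    (hself : ExtVanish Λ T T) :
    IsTorsionClass Λ (GenClass Λ T) ∧ ModuleCat.of Λ T ∈ GenClass Λ T ∧
      ∀ M ∈ GenClass Λ T, Generates Λ T M :=
  ⟨isTorsionClass_genClass hher hself, ⟨hTfl, generates_self⟩, fun _ hM => hM.2⟩

/-- If `Ext¹(T, T) = 0` then `𝒢(T)` is a torsion class and `T` is a cover of it. -/
theorem stmt11 (k : Type) [CommRing k] [IsArtinianRing k]
    (Λ : Type) [Ring Λ] [Algebra k Λ] (hart : IsFiniteLength k Λ)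
    (hher : IsHereditaryRing Λ)
    (T : Type) [AddCommGroup T] [Module Λ T] (hTfl : IsFiniteLength Λ T)
    (hself : ExtVanish Λ T T) :
    IsTorsionClass Λ (GenClass Λ T) ∧ ModuleCat.of Λ T ∈ GenClass Λ T ∧
      ∀ M ∈ GenClass Λ T, Generates Λ T M :=
  stmt11_general Λ hher T hTfl hself
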